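/- arXiv:hep-th/9311134 — 7 statements merged into one kernel-verified Lean document; each statement's English description precedes it below -/
import Mathlib

section
/- Let B be a finite-dimensional algebra with structure constants b^{ij}_k (e^i e^j = b^{ij}_k e^k) satisfying the Novikov identities. Define on the space of B-valued Laurent polynomial maps (equivalently, on basis elements L^i_n, n ∈ ℤ) the bracket [L^i_n, L^j_m] = (n b^{ij}_k - m b^{ji}_k) L^k_{n+m}. Then this bracket satisfies the Jacobi identity, i.e. defines a Lie algebra (the generalized Witt algebra). -/
/-- If the structure constants `b` define a Novikov algebra, then the bracket
`[L^i_n, L^j_m] = (n b^{ij}_k - m b^{ji}_k) L^k_{n+m}` satisfies the Jacobi identity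
(stated on coefficients of the basis vectors `L^q_{n+m+p}`). -/
theorem stmt_4 {N : ℕ} (b : Fin N → Fin N → Fin N → ℂ)
    (h1 : ∀ i j l q : Fin N, ∑ k, b i j k * b k l q = ∑ k, b i l k * b k j q)
    (h2 : ∀ i j l q : Fin N,
      (∑ k, b i j k * b k l q) - (∑ k, b j l k * b i k q)
        = (∑ k, b j i k * b k l q) - (∑ k, b i l k * b j k q)) :
    ∀ (i j l q : Fin N) (n m p : ℤ),
      (∑ k, ((n : ℂ) * b i j k - (m : ℂ) * b j i k) *
          (((n : ℂ) + (m : ℂ)) * b k l q - (p : ℂ) * b l k q))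
      + (∑ k, ((m : ℂ) * b j l k - (p : ℂ) * b l j k) *
          (((m : ℂ) + (p : ℂ)) * b k i q - (n : ℂ) * b i k q))
      + (∑ k, ((p : ℂ) * b l i k - (n : ℂ) * b i l k) *
          (((p : ℂ) + (n : ℂ)) * b k j q - (m : ℂ) * b j k q)) = 0 := by
  intro i j l q n m p
  have E : ∀ (α β γ δ : ℂ) (x y z : Fin N),
      (∑ k, (α * b x y k - β * b y x k) * (γ * b k z q - δ * b z k q))
        = α * γ * (∑ k, b x y k * b k z q) - α * δ * (∑ k, b x y k * b z k q)
          - β * γ * (∑ k, b y x k * b k z q) + β * δ * (∑ k, b y x k * b z k q) := by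
    intro α β γ δ x y z
    simp only [Finset.mul_sum, ← Finset.sum_sub_distrib, ← Finset.sum_add_distrib]
    exact Finset.sum_congr rfl fun k _ => by ring
  rw [E (n : ℂ) (m : ℂ) ((n : ℂ) + (m : ℂ)) (p : ℂ) i j l,
      E (m : ℂ) (p : ℂ) ((m : ℂ) + (p : ℂ)) (n : ℂ) j l i,
      E (p : ℂ) (n : ℂ) ((p : ℂ) + (n : ℂ)) (m : ℂ) l i j]
  linear_combination (n : ℂ) ^ 2 * h1 i j l q + (m : ℂ) ^ 2 * h1 j l i q
    + (p : ℂ) ^ 2 * h1 l i j q + (n : ℂ) * (m : ℂ) * h2 i j l q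
    + (m : ℂ) * (p : ℂ) * h2 j l i q + (n : ℂ) * (p : ℂ) * h2 l i j q
end

section
/- Conversely, if structure constants b^{ij}_k are such that the bracket [L^i_n, L^j_m] = (n b^{ij}_k - m b^{ji}_k) L^k_{n+m} satisfies the Jacobi identity for all n, m (ranging over ℤ), then the multiplication e^i e^j = b^{ij}_k e^k satisfies the two Novikov identities (ab)c = (ac)b and (ab)c - a(bc) = (ba)c - b(ac). -/
/-- Conversely, if the bracket `[L^i_n, L^j_m] = (n b^{ij}_k - m b^{ji}_k) L^k_{n+m}`
satisfies the Jacobi identity for all integers `n, m, p` (stated on coefficients),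
then the structure constants `b` define a Novikov algebra. -/
theorem stmt_5 {N : ℕ} (b : Fin N → Fin N → Fin N → ℂ)
    (hJac : ∀ (i j l q : Fin N) (n m p : ℤ),
      (∑ k, ((n : ℂ) * b i j k - (m : ℂ) * b j i k) *
          (((n : ℂ) + (m : ℂ)) * b k l q - (p : ℂ) * b l k q))
      + (∑ k, ((m : ℂ) * b j l k - (p : ℂ) * b l j k) *
          (((m : ℂ) + (p : ℂ)) * b k i q - (n : ℂ) * b i k q))
      + (∑ k, ((p : ℂ) * b l i k - (n : ℂ) * b i l k) *
          (((p : ℂ) + (n : ℂ)) * b k j q - (m : ℂ) * b j k q)) = 0) :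
    (∀ i j l q : Fin N, ∑ k, b i j k * b k l q = ∑ k, b i l k * b k j q) ∧
    (∀ i j l q : Fin N,
      (∑ k, b i j k * b k l q) - (∑ k, b j l k * b i k q)
        = (∑ k, b j i k * b k l q) - (∑ k, b i l k * b j k q)) := by
  have merge : ∀ (i j l q : Fin N) (n m p : ℤ),
      (∑ k, (((n : ℂ) * b i j k - (m : ℂ) * b j i k) *
          (((n : ℂ) + (m : ℂ)) * b k l q - (p : ℂ) * b l k q)
      + ((m : ℂ) * b j l k - (p : ℂ) * b l j k) *
          (((m : ℂ) + (p : ℂ)) * b k i q - (n : ℂ) * b i k q)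
      + ((p : ℂ) * b l i k - (n : ℂ) * b i l k) *
          (((p : ℂ) + (n : ℂ)) * b k j q - (m : ℂ) * b j k q))) = 0 := by
    intro i j l q n m p
    rw [Finset.sum_add_distrib, Finset.sum_add_distrib]
    exact hJac i j l q n m p
  constructor
  · intro i j l q
    have h1 := merge i j l q 1 0 0
    push_cast at h1
    have key : ∑ k, (b i j k * b k l q - b i l k * b k j q) = 0 := by
      rw [← h1]
      exact Finset.sum_congr rfl fun k _ => by ring
    rw [Finset.sum_sub_distrib, sub_eq_zero] at key
    exact key
  · intro i j l q
    have h1 := merge i j l q 1 0 0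
    have h2 := merge i j l q 0 1 0
    have h3 := merge i j l q 1 1 0
    push_cast at h1 h2 h3
    have key : ∑ k, (b i j k * b k l q - b j l k * b i k q
        - b j i k * b k l q + b i l k * b j k q) = 0 := by
      have e : ∑ k, (b i j k * b k l q - b j l k * b i k q
          - b j i k * b k l q + b i l k * b j k q)
          = (∑ k, (((1 : ℂ) * b i j k - (1 : ℂ) * b j i k) *
          (((1 : ℂ) + (1 : ℂ)) * b k l q - (0 : ℂ) * b l k q)
      + ((1 : ℂ) * b j l k - (0 : ℂ) * b l j k) *
          (((1 : ℂ) + (0 : ℂ)) * b k i q - (1 : ℂ) * b i k q)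
      + ((0 : ℂ) * b l i k - (1 : ℂ) * b i l k) *
          (((0 : ℂ) + (1 : ℂ)) * b k j q - (1 : ℂ) * b j k q)))
          - (∑ k, (((1 : ℂ) * b i j k - (0 : ℂ) * b j i k) *
          (((1 : ℂ) + (0 : ℂ)) * b k l q - (0 : ℂ) * b l k q)
      + ((0 : ℂ) * b j l k - (0 : ℂ) * b l j k) *
          (((0 : ℂ) + (0 : ℂ)) * b k i q - (1 : ℂ) * b i k q)
      + ((0 : ℂ) * b l i k - (1 : ℂ) * b i l k) *
          (((0 : ℂ) + (1 : ℂ)) * b k j q - (0 : ℂ) * b j k q)))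
          - (∑ k, (((0 : ℂ) * b i j k - (1 : ℂ) * b j i k) *
          (((0 : ℂ) + (1 : ℂ)) * b k l q - (0 : ℂ) * b l k q)
      + ((1 : ℂ) * b j l k - (0 : ℂ) * b l j k) *
          (((1 : ℂ) + (0 : ℂ)) * b k i q - (0 : ℂ) * b i k q)
      + ((0 : ℂ) * b l i k - (0 : ℂ) * b i l k) *
          (((0 : ℂ) + (0 : ℂ)) * b k j q - (1 : ℂ) * b j k q))) := by
        rw [← Finset.sum_sub_distrib, ← Finset.sum_sub_distrib]
        exact Finset.sum_congr rfl fun k _ => by ring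
      rw [e, h1, h2, h3]
      ring
    rw [Finset.sum_add_distrib, Finset.sum_sub_distrib, Finset.sum_sub_distrib] at key
    linear_combination key
end

section
/- Let B be a commutative Novikov algebra (hence associative) with unit, and let l : B → ℂ be a linear functional. Then the 2-cochain ω on the generalized Witt algebra defined by ω(L^i_n, L^j_m) = l(e^i e^j) · (n³ - n)/12 · δ_{n+m,0} is a Lie algebra 2-cocycle, i.e. it is antisymmetric and satisfies ω([x,y],z) + ω([y,z],x) + ω([z,x],y) = 0. -/
/-- For a commutative associative unital algebra `B` (structure constants `b`) and a linear
functional `l` (values `lv` on the basis), the 2-cochain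
`ω(L^i_n, L^j_m) = l(e^i e^j) (n³ - n)/12 δ_{n+m,0}` on the generalized Witt algebra is
antisymmetric and satisfies the Lie algebra 2-cocycle condition. -/
theorem stmt_6 {N : ℕ} (b : Fin N → Fin N → Fin N → ℂ) (lv : Fin N → ℂ)
    (hcomm : ∀ i j k : Fin N, b i j k = b j i k)
    (hassoc : ∀ i j l q : Fin N, ∑ k, b i j k * b k l q = ∑ k, b j l k * b i k q)
    (hunit : ∃ u : Fin N → ℂ, ∀ j q : Fin N, ∑ i, u i * b i j q = if j = q then 1 else 0)
    (ω : Fin N → ℤ → Fin N → ℤ → ℂ)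
    (hω : ∀ (i : Fin N) (n : ℤ) (j : Fin N) (m : ℤ),
      ω i n j m = (∑ q, b i j q * lv q) * (((n : ℂ)^3 - (n : ℂ))/12) *
        (if n + m = 0 then 1 else 0)) :
    (∀ (i : Fin N) (n : ℤ) (j : Fin N) (m : ℤ), ω i n j m = - ω j m i n) ∧
    (∀ (i : Fin N) (n : ℤ) (j : Fin N) (m : ℤ) (l : Fin N) (p : ℤ),
      ((n : ℂ) - (m : ℂ)) * (∑ k, b i j k * ω k (n + m) l p)
      + ((m : ℂ) - (p : ℂ)) * (∑ k, b j l k * ω k (m + p) i n)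
      + ((p : ℂ) - (n : ℂ)) * (∑ k, b l i k * ω k (p + n) j m) = 0) := by
  constructor
  · intro i n j m
    rw [hω, hω]
    have hcc : (∑ q, b i j q * lv q) = ∑ q, b j i q * lv q :=
      Finset.sum_congr rfl fun q _ => by rw [hcomm]
    rw [hcc]
    by_cases h : n + m = 0
    · have hm : (m : ℂ) = -(n : ℂ) := by
        have : m = -n := by omega
        simp [this]
      simp only [h, show m + n = 0 by omega, if_pos, hm]
      ring
    · simp [h, show ¬ (m + n = 0) by omega]
  · intro i n j m l p
    have e : ∀ (i' j' l' : Fin N) (n' p' : ℤ),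
        (∑ k, b i' j' k * ω k n' l' p')
          = (∑ q, (∑ k, b i' j' k * b k l' q) * lv q)
            * (((n' : ℂ)^3 - (n' : ℂ))/12) * (if n' + p' = 0 then 1 else 0) := by
      intro i' j' l' n' p'
      simp only [hω, Finset.mul_sum, Finset.sum_mul]
      rw [Finset.sum_comm]
      refine Finset.sum_congr rfl fun k _ => Finset.sum_congr rfl fun q _ => by ring
    rw [e i j l (n+m) p, e j l i (m+p) n, e l i j (p+n) m]
    have hT12 : (∑ q, (∑ k, b j l k * b k i q) * lv q)
        = (∑ q, (∑ k, b i j k * b k l q) * lv q) := by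
      refine Finset.sum_congr rfl fun q _ => ?_
      rw [hassoc i j l q]
      congr 1
      exact Finset.sum_congr rfl fun k _ => by rw [hcomm i k q]
    have hT13 : (∑ q, (∑ k, b l i k * b k j q) * lv q)
        = (∑ q, (∑ k, b i j k * b k l q) * lv q) := by
      refine Finset.sum_congr rfl fun q _ => ?_
      congr 1
      calc ∑ k, b l i k * b k j q
          = ∑ k, b l i k * b j k q :=
            Finset.sum_congr rfl fun k _ => by rw [hcomm j k q]
        _ = ∑ k, b j l k * b k i q := (hassoc j l i q).symm
        _ = ∑ k, b j l k * b i k q :=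
            Finset.sum_congr rfl fun k _ => by rw [hcomm k i q]
        _ = ∑ k, b i j k * b k l q := (hassoc i j l q).symm
    rw [hT12, hT13]
    by_cases h : n + m + p = 0
    · have hp : (p : ℂ) = -(n : ℂ) - (m : ℂ) := by
        have : p = -n - m := by omega
        rw [this]; push_cast; ring
      simp only [h, show m + p + n = 0 by omega, show p + n + m = 0 by omega, if_pos]
      push_cast
      rw [hp]
      ring
    · simp [h, show ¬ (m + p + n = 0) by omega, show ¬ (p + n + m = 0) by omega]
end

section
/- Let F¹,...,F^N be commuting self-adjoint linear operators on an inner product space (V, g₀) satisfying F^i F^j = (1/2) C^{ij}_k F^k, where C^{ij}_k = C^{ji}_k. Then the map u^i(v) = (1/2) g₀(F^i v, v) has Jacobian (∂u^i/∂v^α) satisfying g^{ij}(u(v)) = C^{ij}_k u^k(v) where g^{ij}(u(v)) := g₀-pairing of the gradients, i.e. the quadratic change of variables reduces the linear metric C^{ij}_k u^k to the constant metric g₀. -/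
/-- Commuting `g₀`-self-adjoint operators `F^i` with `F^i F^j = (1/2) C^{ij}_k F^k` give a
quadratic change of variables `u^i(v) = (1/2) g₀(F^i v, v)` reducing the linear metric
`C^{ij}_k u^k` to the constant metric `g₀`: the `g₀`-pairing of the gradients of `u^i, u^j`
(which are `F^i v`, `F^j v`) equals `C^{ij}_k u^k(v)`. -/
theorem stmt_14 {N : ℕ} {V : Type*} [AddCommGroup V] [Module ℂ V] [FiniteDimensional ℂ V]
    (g0 : V →ₗ[ℂ] V →ₗ[ℂ] ℂ) (hsymm : ∀ x y : V, g0 x y = g0 y x)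
    (hnd : ∀ x : V, (∀ y : V, g0 x y = 0) → x = 0)
    (F : Fin N → V →ₗ[ℂ] V) (C : Fin N → Fin N → Fin N → ℂ)
    (hC : ∀ i j k : Fin N, C i j k = C j i k)
    (hsa : ∀ (i : Fin N) (x y : V), g0 (F i x) y = g0 x (F i y))
    (hcommute : ∀ (i j : Fin N) (x : V), F i (F j x) = F j (F i x))
    (hFF : ∀ (i j : Fin N) (x : V), F i (F j x) = (1/2 : ℂ) • ∑ k, C i j k • F k x) :
    ∀ (i j : Fin N) (v : V),
      g0 (F i v) (F j v) = ∑ k, C i j k * ((1/2 : ℂ) * g0 (F k v) v) := by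
  intro i j v
  calc g0 (F i v) (F j v) = g0 v (F i (F j v)) := hsa i v (F j v)
    _ = g0 v ((1/2 : ℂ) • ∑ k, C i j k • F k v) := by rw [hFF]
    _ = ∑ k, C i j k * ((1/2 : ℂ) * g0 (F k v) v) := by
        rw [map_smul, map_sum]
        simp only [map_smul, smul_eq_mul, Finset.mul_sum]
        refine Finset.sum_congr rfl fun k _ => ?_
        rw [hsymm v (F k v)]
        ring
end

section
/- The generalized Witt algebra bracket [f, g] = f'g - g'f on B-valued Laurent polynomials, where B is a Novikov algebra and products are taken in B, satisfies the Jacobi identity. -/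
/-- The generalized Witt bracket `[f,g] = f'g - g'f` on `B`-valued Laurent polynomials,
modelled as finitely supported coefficient functions `ℤ →₀ B`. -/
noncomputable def wittBracket {B : Type*} [NonUnitalNonAssocRing B] (f g : ℤ →₀ B) : ℤ →₀ B :=
  f.sum fun n a => g.sum fun m b =>
    Finsupp.single (n + m - 1) (n • (a * b) - m • (b * a))

section aux
variable {B : Type*} [NonUnitalNonAssocRing B]

lemma witt_zero_left (g : ℤ →₀ B) : wittBracket 0 g = 0 := by
  simp [wittBracket]

lemma witt_zero_right (f : ℤ →₀ B) : wittBracket f 0 = 0 := by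
  simp [wittBracket]

lemma witt_add_left (f1 f2 g : ℤ →₀ B) :
    wittBracket (f1 + f2) g = wittBracket f1 g + wittBracket f2 g := by
  unfold wittBracket
  apply Finsupp.sum_add_index' <;> intro n
  · simp
  · intro a1 a2
    rw [← Finsupp.sum_add]
    congr 1; ext m b
    rw [← Finsupp.single_add]
    congr 1
    simp [add_mul, mul_add, smul_add]
    abel

lemma witt_add_right (f g1 g2 : ℤ →₀ B) :
    wittBracket f (g1 + g2) = wittBracket f g1 + wittBracket f g2 := by
  unfold wittBracket
  rw [← Finsupp.sum_add]
  apply Finsupp.sum_congr; intro n _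
  apply Finsupp.sum_add_index' <;> intro m
  · simp
  · intro b1 b2
    rw [← Finsupp.single_add]
    congr 1
    simp [add_mul, mul_add, smul_add]
    abel

lemma witt_single_single (n m : ℤ) (a b : B) :
    wittBracket (Finsupp.single n a) (Finsupp.single m b)
      = Finsupp.single (n + m - 1) (n • (a * b) - m • (b * a)) := by
  unfold wittBracket
  have inner0 : ((Finsupp.single m b).sum fun m' b' =>
      Finsupp.single (n + m' - 1) (n • ((0:B) * b') - m' • (b' * (0:B)))) = 0 := by
    rw [Finsupp.sum_single_index] <;> simp
  rw [Finsupp.sum_single_index inner0, Finsupp.sum_single_index (by simp)]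


lemma key (h1 : ∀ a b c : B, (a * b) * c = (a * c) * b)
    (h2 : ∀ a b c : B, (a * b) * c - a * (b * c) = (b * a) * c - b * (a * c))
    (n m p : ℤ) (a b c : B) :
    ((n + m - 1) • ((n • (a * b) - m • (b * a)) * c) - p • (c * (n • (a * b) - m • (b * a))))
    + ((m + p - 1) • ((m • (b * c) - p • (c * b)) * a) - n • (a * (m • (b * c) - p • (c * b))))
    + ((p + n - 1) • ((p • (c * a) - n • (a * c)) * b) - m • (b * (p • (c * a) - n • (a * c))))
      = 0 := by
  have e1 : b * (a * c) = (b * a) * c - (a * b) * c + a * (b * c) := by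
    linear_combination (norm := abel) h2 a b c
  have e2 : c * (b * a) = (c * b) * a - (b * c) * a + b * (c * a) := by
    linear_combination (norm := abel) h2 b c a
  have e3 : a * (c * b) = (a * c) * b - (c * a) * b + c * (a * b) := by
    linear_combination (norm := abel) h2 c a b
  simp only [sub_mul, mul_sub, smul_sub, smul_mul_assoc, mul_smul_comm, smul_smul]
  rw [h1 a c b, h1 b c a, h1 c b a, e1, e2, e3, h1 a c b, h1 b c a, h1 c b a]
  module

/-- Jacobi sum abbreviation. -/
noncomputable def jacSum (f g k : ℤ →₀ B) : ℤ →₀ B :=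
  wittBracket (wittBracket f g) k + wittBracket (wittBracket g k) f
    + wittBracket (wittBracket k f) g

lemma jacSum_add1 (f1 f2 g k : ℤ →₀ B) :
    jacSum (f1 + f2) g k = jacSum f1 g k + jacSum f2 g k := by
  simp only [jacSum, witt_add_left, witt_add_right]; abel

lemma jacSum_add2 (f g1 g2 k : ℤ →₀ B) :
    jacSum f (g1 + g2) k = jacSum f g1 k + jacSum f g2 k := by
  simp only [jacSum, witt_add_left, witt_add_right]; abel

lemma jacSum_add3 (f g k1 k2 : ℤ →₀ B) :
    jacSum f g (k1 + k2) = jacSum f g k1 + jacSum f g k2 := by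
  simp only [jacSum, witt_add_left, witt_add_right]; abel

lemma jacSum_sss (h1 : ∀ a b c : B, (a * b) * c = (a * c) * b)
    (h2 : ∀ a b c : B, (a * b) * c - a * (b * c) = (b * a) * c - b * (a * c))
    (n m p : ℤ) (a b c : B) :
    jacSum (Finsupp.single n a) (Finsupp.single m b) (Finsupp.single p c) = 0 := by
  simp only [jacSum, witt_single_single]
  rw [show n + m - 1 + p - 1 = n + m + p - 2 from by ring,
    show m + p - 1 + n - 1 = n + m + p - 2 from by ring,
    show p + n - 1 + m - 1 = n + m + p - 2 from by ring,
    ← Finsupp.single_add, ← Finsupp.single_add, Finsupp.single_eq_zero]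
  exact key h1 h2 n m p a b c

lemma jacSum_ssk (h1 : ∀ a b c : B, (a * b) * c = (a * c) * b)
    (h2 : ∀ a b c : B, (a * b) * c - a * (b * c) = (b * a) * c - b * (a * c))
    (n m : ℤ) (a b : B) (k : ℤ →₀ B) :
    jacSum (Finsupp.single n a) (Finsupp.single m b) k = 0 := by
  induction k using Finsupp.induction with
  | zero => simp [jacSum, witt_zero_left, witt_zero_right]
  | single_add p c k _ _ ih => rw [jacSum_add3, jacSum_sss h1 h2, ih, add_zero]

lemma jacSum_sgk (h1 : ∀ a b c : B, (a * b) * c = (a * c) * b)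
    (h2 : ∀ a b c : B, (a * b) * c - a * (b * c) = (b * a) * c - b * (a * c))
    (n : ℤ) (a : B) (g k : ℤ →₀ B) :
    jacSum (Finsupp.single n a) g k = 0 := by
  induction g using Finsupp.induction with
  | zero => simp [jacSum, witt_zero_left, witt_zero_right]
  | single_add m b g _ _ ih => rw [jacSum_add2, jacSum_ssk h1 h2, ih, add_zero]

end aux

/-- For a Novikov algebra `B`, the bracket `[f,g] = f'g - g'f` on `B`-valued Laurent
polynomials satisfies the Jacobi identity. -/
theorem stmt_17 {B : Type*} [NonUnitalNonAssocRing B]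
    (h1 : ∀ a b c : B, (a * b) * c = (a * c) * b)
    (h2 : ∀ a b c : B, (a * b) * c - a * (b * c) = (b * a) * c - b * (a * c)) :
    ∀ f g k : ℤ →₀ B,
      wittBracket (wittBracket f g) k + wittBracket (wittBracket g k) f
        + wittBracket (wittBracket k f) g = 0 := by
  intro f g k
  show jacSum f g k = 0
  induction f using Finsupp.induction with
  | zero => simp [jacSum, witt_zero_left, witt_zero_right]
  | single_add n a f _ _ ih => rw [jacSum_add1, jacSum_sgk h1 h2, ih, add_zero]
end

section
/- For the Heisenberg algebra generators a(s), s ∈ ℤ, with [a(s), a(k)] = s δ_{s+k,0} (one field, N = 1), the normally ordered quadratic expressions L_n := (1/2) Σ_{s∈ℤ} :a(n-s)a(s): acting on the bosonic Fock space satisfy the Virasoro relations [L_n, L_m] = (n-m)L_{n+m} + (n³-n)/12 δ_{n+m,0}, i.e. the Sugawara/free-field construction realizes the central extension with central charge 1. -/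
open MvPolynomial

/-- The bosonic Fock space: polynomials `ℂ[x₁, x₂, ...]`. -/
abbrev FockSpace : Type := MvPolynomial ℕ+ ℂ

/-- The Heisenberg field modes on Fock space: `a(s) = s ∂/∂x_s` for `s > 0`,
`a(-s) = ` multiplication by `x_s` for `s > 0`, and `a(0) = μ • id`. -/
noncomputable def heis (μ : ℂ) (s : ℤ) : FockSpace →ₗ[ℂ] FockSpace :=
  if hs : 0 < s then
    (s : ℂ) • ((pderiv (⟨s.toNat, by omega⟩ : ℕ+)).toLinearMap)
  else if hs' : s < 0 then
    LinearMap.mulLeft ℂ (X (⟨(-s).toNat, by omega⟩ : ℕ+))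
  else μ • LinearMap.id

/-- Normal ordering `:a(p)a(q):` — the annihilation operator (positive mode) to the right. -/
noncomputable def nord (μ : ℂ) (p q : ℤ) : FockSpace →ₗ[ℂ] FockSpace :=
  if p ≤ q then heis μ p ∘ₗ heis μ q else heis μ q ∘ₗ heis μ p

/-- The Sugawara operators `L_n = (1/2) Σ_{s ∈ ℤ} :a(n-s)a(s):` (on each vector only
finitely many terms are nonzero, so the sum `∑ᶠ` is well defined). -/
noncomputable def sugawara (μ : ℂ) (n : ℤ) (v : FockSpace) : FockSpace :=
  (1/2 : ℂ) • ∑ᶠ s : ℤ, nord μ (n - s) s v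

lemma heis_pos (μ : ℂ) {s : ℤ} (hs : 0 < s) (i : ℕ+) (hi : (i : ℕ) = s.toNat)
    (v : FockSpace) : heis μ s v = (s : ℂ) • pderiv i v := by
  have hie : i = (⟨s.toNat, by omega⟩ : ℕ+) := PNat.eq hi
  rw [heis, dif_pos hs, hie]; rfl

lemma heis_neg (μ : ℂ) {s : ℤ} (hs : s < 0) (i : ℕ+) (hi : (i : ℕ) = (-s).toNat)
    (v : FockSpace) : heis μ s v = (X i : FockSpace) * v := by
  have hie : i = (⟨(-s).toNat, by omega⟩ : ℕ+) := PNat.eq hi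
  rw [heis, dif_neg (by omega), dif_pos hs, hie]; rfl

lemma heis_zero (μ : ℂ) (v : FockSpace) : heis μ 0 v = μ • v := by
  rw [heis, dif_neg (by omega), dif_neg (by omega)]; rfl

lemma pderiv_comm' (i j : ℕ+) (p : FockSpace) :
    pderiv i (pderiv j p) = pderiv j (pderiv i p) := by
  induction p using MvPolynomial.induction_on' with
  | monomial u a =>
    simp only [pderiv_monomial]
    rcases eq_or_ne i j with rfl | hij
    · rfl
    · have h1 : ((u - Finsupp.single j 1 : ℕ+ →₀ ℕ)) i = u i := by
        rw [Finsupp.tsub_apply, Finsupp.single_eq_of_ne' (Ne.symm hij)]; simp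
      have h2 : ((u - Finsupp.single i 1 : ℕ+ →₀ ℕ)) j = u j := by
        rw [Finsupp.tsub_apply, Finsupp.single_eq_of_ne' hij]; simp
      rw [h1, h2, tsub_tsub, tsub_tsub, add_comm (Finsupp.single j 1), mul_right_comm]
  | add p q hp hq => simp [map_add, hp, hq]

lemma heis_comm_pn (μ : ℂ) {s k : ℤ} (hs : 0 < s) (hk : k < 0) (v : FockSpace) :
    heis μ s (heis μ k v) - heis μ k (heis μ s v)
      = (if s + k = 0 then (s:ℂ) else 0) • v := by
  obtain ⟨i, hi⟩ : ∃ i : ℕ+, (i : ℕ) = s.toNat := ⟨⟨s.toNat, by omega⟩, rfl⟩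
  obtain ⟨j, hj⟩ : ∃ j : ℕ+, (j : ℕ) = (-k).toNat := ⟨⟨(-k).toNat, by omega⟩, rfl⟩
  rw [heis_pos μ hs i hi, heis_pos μ hs i hi, heis_neg μ hk j hj, heis_neg μ hk j hj]
  by_cases hsk : s + k = 0
  · have hij : i = j := PNat.eq (by omega)
    rw [if_pos hsk, hij, pderiv_mul, pderiv_X_self, one_mul, smul_add, mul_smul_comm]
    abel
  · have hij : i ≠ j := by intro h; rw [h] at hi; omega
    rw [if_neg hsk, zero_smul, pderiv_mul, pderiv_X_of_ne (Ne.symm hij), zero_mul,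
      zero_add, mul_smul_comm, sub_self]

lemma heis_heis_comm (μ : ℂ) (s k : ℤ) (v : FockSpace) :
    heis μ s (heis μ k v) - heis μ k (heis μ s v)
      = (if s + k = 0 then (s:ℂ) else 0) • v := by
  rcases lt_trichotomy 0 s with hs | hs | hs
  · rcases lt_trichotomy 0 k with hk | hk | hk
    · obtain ⟨i, hi⟩ : ∃ i : ℕ+, (i : ℕ) = s.toNat := ⟨⟨s.toNat, by omega⟩, rfl⟩
      obtain ⟨j, hj⟩ : ∃ j : ℕ+, (j : ℕ) = k.toNat := ⟨⟨k.toNat, by omega⟩, rfl⟩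
      rw [if_neg (by omega), zero_smul, heis_pos μ hs i hi, heis_pos μ hs i hi,
        heis_pos μ hk j hj, heis_pos μ hk j hj, Derivation.map_smul, Derivation.map_smul,
        pderiv_comm' i j, smul_comm (s:ℂ) (k:ℂ), sub_self]
    · subst hk
      rw [if_neg (by omega), zero_smul]
      simp only [heis_zero, map_smul]
      rw [sub_self]
    · exact heis_comm_pn μ hs hk v
  · subst hs
    simp [heis_zero, map_smul]
  · rcases lt_trichotomy 0 k with hk | hk | hk
    · have h := heis_comm_pn μ hk hs v
      have h2 : heis μ s (heis μ k v) - heis μ k (heis μ s v)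
          = -(heis μ k (heis μ s v) - heis μ s (heis μ k v)) := by abel
      rw [h2, h]
      by_cases hsk : s + k = 0
      · rw [if_pos (by omega), if_pos hsk, ← neg_smul]
        congr 1
        have hks : s = -k := by omega
        subst hks; push_cast; ring
      · rw [if_neg (by omega), if_neg hsk]; simp
    · subst hk
      rw [if_neg (by omega), zero_smul]
      simp only [heis_zero, map_smul]
      rw [sub_self]
    · obtain ⟨i, hi⟩ : ∃ i : ℕ+, (i : ℕ) = (-s).toNat := ⟨⟨(-s).toNat, by omega⟩, rfl⟩
      obtain ⟨j, hj⟩ : ∃ j : ℕ+, (j : ℕ) = (-k).toNat := ⟨⟨(-k).toNat, by omega⟩, rfl⟩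
      rw [if_neg (by omega), zero_smul, heis_neg μ hs i hi, heis_neg μ hs i hi,
        heis_neg μ hk j hj, heis_neg μ hk j hj, mul_left_comm, sub_self]

lemma heis_heis_eq_nord (μ : ℂ) (p q : ℤ) (v : FockSpace) :
    heis μ p (heis μ q v)
      = nord μ p q v + (if p + q = 0 ∧ q < p then (p:ℂ) else 0) • v := by
  rw [nord]
  by_cases h : p ≤ q
  · rw [if_pos h, if_neg (by omega), zero_smul, add_zero]; rfl
  · rw [if_neg h]
    have hc := heis_heis_comm μ p q v
    have h2 : heis μ p (heis μ q v)
        = heis μ q (heis μ p v) + (if p + q = 0 then (p:ℂ) else 0) • v := by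
      rw [← hc]; abel
    rw [h2]
    congr 2
    by_cases hpq : p + q = 0
    · rw [if_pos hpq, if_pos ⟨hpq, by omega⟩]
    · rw [if_neg hpq, if_neg (by tauto)]

lemma heis_comm3 (μ : ℂ) (p q k : ℤ) (v : FockSpace) :
    heis μ p (heis μ q (heis μ k v)) - heis μ k (heis μ p (heis μ q v))
      = (if q + k = 0 then (q:ℂ) else 0) • heis μ p v
        + (if p + k = 0 then (p:ℂ) else 0) • heis μ q v := by
  have h1 : heis μ p (heis μ q (heis μ k v)) - heis μ p (heis μ k (heis μ q v))
      = (if q + k = 0 then (q:ℂ) else 0) • heis μ p v := by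
    rw [← map_sub, heis_heis_comm, map_smul]
  have h2 := heis_heis_comm μ p k (heis μ q v)
  linear_combination (norm := abel) h1 + h2
-- layer 3 (appended to w2 for testing)
def bd (d : ℕ) (v : FockSpace) : Prop := ∀ i ∈ v.vars, (i : ℕ) ≤ d

noncomputable def bnd (v : FockSpace) : ℕ := v.vars.sup (fun i => (i : ℕ))

lemma bd_bnd (v : FockSpace) : bd (bnd v) v := fun _ hi => Finset.le_sup (f := fun i : ℕ+ => (i:ℕ)) hi

lemma bd_mono {d d' : ℕ} (h : d ≤ d') {v : FockSpace} (hv : bd d v) : bd d' v :=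
  fun i hi => le_trans (hv i hi) h

lemma bd_zero (d : ℕ) : bd d (0 : FockSpace) := by
  intro i hi
  simp [vars_0] at hi

lemma bd_add {d : ℕ} {u w : FockSpace} (hu : bd d u) (hw : bd d w) : bd d (u + w) := by
  intro i hi
  rcases Finset.mem_union.mp (vars_add_subset u w hi) with h | h
  · exact hu i h
  · exact hw i h

lemma bd_smul {d : ℕ} (c : ℂ) {v : FockSpace} (hv : bd d v) : bd d (c • v) := by
  intro i hi
  rw [smul_eq_C_mul] at hi
  rcases Finset.mem_union.mp (vars_mul _ _ hi) with h | h
  · simp [vars_C] at h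
  · exact hv i h

lemma bd_finset_sum {α : Type*} {d : ℕ} {I : Finset α} {f : α → FockSpace}
    (h : ∀ a ∈ I, bd d (f a)) : bd d (∑ a ∈ I, f a) := by
  classical
  induction I using Finset.induction_on with
  | empty => simpa using bd_zero d
  | insert _ _ hni ih =>
    rw [Finset.sum_insert hni]
    exact bd_add (h _ (Finset.mem_insert_self _ _))
      (ih fun a ha => h a (Finset.mem_insert_of_mem ha))

lemma vars_pderiv (i : ℕ+) (p : FockSpace) : (pderiv i p).vars ⊆ p.vars := by
  classical
  conv_lhs => rw [p.as_sum]
  rw [map_sum]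
  refine (vars_sum_subset _ _).trans (Finset.biUnion_subset.mpr fun u hu => ?_)
  rw [pderiv_monomial]
  by_cases h : coeff u p * u i = 0
  · rw [h]
    simp [vars_monomial]
  · rw [vars_monomial h]
    intro j hj
    have hj' : j ∈ u.support := Finsupp.support_tsub hj
    exact (mem_vars j).mpr ⟨u, hu, hj'⟩

lemma bd_heis (μ : ℂ) (s : ℤ) {d : ℕ} {v : FockSpace} (h : bd d v) :
    bd (max d s.natAbs) (heis μ s v) := by
  rcases lt_trichotomy 0 s with hs | hs | hs
  · obtain ⟨i, hi⟩ : ∃ i : ℕ+, (i : ℕ) = s.toNat := ⟨⟨s.toNat, by omega⟩, rfl⟩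
    rw [heis_pos μ hs i hi]
    exact bd_smul _ (fun j hj => le_trans (h j (vars_pderiv i v hj)) (le_max_left _ _))
  · subst hs
    rw [heis_zero]
    exact bd_smul _ (bd_mono (le_max_left _ _) h)
  · obtain ⟨i, hi⟩ : ∃ i : ℕ+, (i : ℕ) = (-s).toNat := ⟨⟨(-s).toNat, by omega⟩, rfl⟩
    rw [heis_neg μ hs i hi]
    intro j hj
    rcases Finset.mem_union.mp (vars_mul _ _ hj) with hh | hh
    · rw [vars_X] at hh
      rcases Finset.mem_singleton.mp hh with rfl
      omega
    · exact le_trans (h j hh) (le_max_left _ _)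

lemma heis_ann (μ : ℂ) {s : ℤ} {d : ℕ} {v : FockSpace} (h : bd d v) (hd : (d : ℤ) < s) :
    heis μ s v = 0 := by
  have hs : 0 < s := by omega
  obtain ⟨i, hi⟩ : ∃ i : ℕ+, (i : ℕ) = s.toNat := ⟨⟨s.toNat, by omega⟩, rfl⟩
  rw [heis_pos μ hs i hi, pderiv_eq_zero_of_notMem_vars, smul_zero]
  intro hmem
  have := h i hmem
  omega

lemma bd_nord (μ : ℂ) (p q : ℤ) {d : ℕ} {v : FockSpace} (h : bd d v) :
    bd (max (max d p.natAbs) q.natAbs) (nord μ p q v) := by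
  rw [nord]
  split_ifs
  · show bd _ (heis μ p (heis μ q v))
    have h1 := bd_heis μ p (bd_heis μ q h)
    exact bd_mono (by omega) h1
  · show bd _ (heis μ q (heis μ p v))
    have h1 := bd_heis μ q (bd_heis μ p h)
    exact bd_mono (by omega) h1

lemma nord_ann (μ : ℂ) {p q : ℤ} {d : ℕ} {v : FockSpace} (h : bd d v)
    (hd : (d : ℤ) < max p q) : nord μ p q v = 0 := by
  rw [nord]
  split_ifs with hpq
  · show heis μ p (heis μ q v) = 0
    rw [heis_ann μ h (by omega), map_zero]
  · show heis μ q (heis μ p v) = 0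
    rw [heis_ann μ h (by omega), map_zero]

lemma sugawara_eq_sum (μ : ℂ) (n : ℤ) {d : ℕ} {v : FockSpace} (h : bd d v)
    {I : Finset ℤ} (hI : Finset.Icc (n - d) (d : ℤ) ⊆ I) :
    sugawara μ n v = (1/2 : ℂ) • ∑ s ∈ I, nord μ (n - s) s v := by
  rw [sugawara]
  congr 1
  apply finsum_eq_finset_sum_of_support_subset
  intro s hs
  simp only [Function.mem_support] at hs
  apply hI
  rw [Finset.mem_Icc]
  by_contra hc
  exact hs (nord_ann μ h (by omega))

lemma bd_sugawara (μ : ℂ) (n : ℤ) {d : ℕ} {v : FockSpace} (h : bd d v) :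
    bd (d + n.natAbs) (sugawara μ n v) := by
  rw [sugawara_eq_sum μ n h (Finset.Subset.refl _)]
  apply bd_smul
  apply bd_finset_sum
  intro s hs
  rw [Finset.mem_Icc] at hs
  exact bd_mono (by omega) (bd_nord μ (n - s) s h)

lemma sugawara_zero (μ : ℂ) (n : ℤ) : sugawara μ n 0 = 0 := by
  rw [sugawara]
  simp [map_zero]

lemma sugawara_add (μ : ℂ) (n : ℤ) (u w : FockSpace) :
    sugawara μ n (u + w) = sugawara μ n u + sugawara μ n w := by
  set d := max (bnd u) (bnd w) with hd
  have hu : bd d u := bd_mono (le_max_left _ _) (bd_bnd u)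
  have hw : bd d w := bd_mono (le_max_right _ _) (bd_bnd w)
  rw [sugawara_eq_sum μ n hu (Finset.Subset.refl _),
    sugawara_eq_sum μ n hw (Finset.Subset.refl _),
    sugawara_eq_sum μ n (bd_add hu hw) (Finset.Subset.refl _)]
  rw [← smul_add, ← Finset.sum_add_distrib]
  simp only [map_add]

lemma sugawara_smul (μ : ℂ) (n : ℤ) (c : ℂ) (v : FockSpace) :
    sugawara μ n (c • v) = c • sugawara μ n v := by
  rw [sugawara_eq_sum μ n (bd_bnd v) (Finset.Subset.refl _),
    sugawara_eq_sum μ n (bd_smul c (bd_bnd v)) (Finset.Subset.refl _)]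
  simp only [map_smul]
  rw [← Finset.smul_sum, smul_comm]

lemma sugawara_sum (μ : ℂ) (n : ℤ) {α : Type*} (I : Finset α) (f : α → FockSpace) :
    sugawara μ n (∑ a ∈ I, f a) = ∑ a ∈ I, sugawara μ n (f a) := by
  classical
  induction I using Finset.induction_on with
  | empty => simpa using sugawara_zero μ n
  | insert _ _ hni ih => rw [Finset.sum_insert hni, Finset.sum_insert hni, sugawara_add, ih]
-- layer 4: commutators with sugawara
lemma nord_heis_comm (μ : ℂ) (p q k : ℤ) (v : FockSpace) :
    nord μ p q (heis μ k v) - heis μ k (nord μ p q v)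
      = (if q + k = 0 then (q:ℂ) else 0) • heis μ p v
        + (if p + k = 0 then (p:ℂ) else 0) • heis μ q v := by
  by_cases h : p ≤ q
  · rw [nord, if_pos h]
    exact heis_comm3 μ p q k v
  · rw [nord, if_neg h, add_comm]
    exact heis_comm3 μ q p k v

lemma sugawara_heis_comm (μ : ℂ) (n k : ℤ) (v : FockSpace) :
    sugawara μ n (heis μ k v) - heis μ k (sugawara μ n v)
      = (-(k:ℂ)) • heis μ (n + k) v := by
  set d : ℕ := bnd v + k.natAbs with hd
  have hv : bd d v := bd_mono (by omega) (bd_bnd v)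
  have hkv : bd d (heis μ k v) := bd_mono (by omega) (bd_heis μ k (bd_bnd v))
  set I : Finset ℤ := Finset.Icc (n - (d:ℤ)) (d:ℤ) ∪ {-k, n + k} with hI
  have hsub : Finset.Icc (n - (d:ℤ)) (d:ℤ) ⊆ I := Finset.subset_union_left
  have hmk : -k ∈ I := Finset.mem_union_right _ (by simp)
  have hnk : n + k ∈ I := Finset.mem_union_right _ (by simp)
  rw [sugawara_eq_sum μ n hkv hsub, sugawara_eq_sum μ n hv hsub, map_smul, map_sum,
    ← smul_sub, ← Finset.sum_sub_distrib]
  have hterm : ∀ s ∈ I, nord μ (n - s) s (heis μ k v) - heis μ k (nord μ (n - s) s v)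
      = (if s = -k then (s:ℂ) • heis μ (n - s) v else 0)
        + (if s = n + k then ((n - s : ℤ):ℂ) • heis μ s v else 0) := by
    intro s _
    rw [nord_heis_comm]
    congr 1
    · by_cases h : s + k = 0
      · rw [if_pos h, if_pos (by omega)]
      · rw [if_neg h, if_neg (by omega), zero_smul]
    · by_cases h : (n - s) + k = 0
      · rw [if_pos h, if_pos (by omega)]
      · rw [if_neg h, if_neg (by omega), zero_smul]
  rw [Finset.sum_congr rfl hterm, Finset.sum_add_distrib,
    Finset.sum_ite_eq' I (-k) (fun s => (s:ℂ) • heis μ (n - s) v),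
    Finset.sum_ite_eq' I (n + k) (fun s => ((n - s : ℤ):ℂ) • heis μ s v),
    if_pos hmk, if_pos hnk]
  have e1 : n - -k = n + k := by ring
  have e2 : ((n - (n + k) : ℤ) : ℂ) = -(k:ℂ) := by push_cast; ring
  rw [e1, e2]
  push_cast
  module

lemma sugawara_nord_comm (μ : ℂ) (n p q : ℤ) (v : FockSpace) :
    sugawara μ n (nord μ p q v) - nord μ p q (sugawara μ n v)
      = (-(p:ℂ)) • heis μ (n + p) (heis μ q v)
        + (-(q:ℂ)) • heis μ p (heis μ (n + q) v) := by
  rw [nord]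
  split_ifs with h
  · have hA := sugawara_heis_comm μ n p (heis μ q v)
    have hB : heis μ p (sugawara μ n (heis μ q v)) - heis μ p (heis μ q (sugawara μ n v))
        = (-(q:ℂ)) • heis μ p (heis μ (n + q) v) := by
      rw [← map_sub, sugawara_heis_comm, map_smul]
    show sugawara μ n (heis μ p (heis μ q v)) - heis μ p (heis μ q (sugawara μ n v)) = _
    linear_combination (norm := abel) hA + hB
  · have hA := sugawara_heis_comm μ n q (heis μ p v)
    have hB : heis μ q (sugawara μ n (heis μ p v)) - heis μ q (heis μ p (sugawara μ n v))
        = (-(p:ℂ)) • heis μ q (heis μ (n + p) v) := by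
      rw [← map_sub, sugawara_heis_comm, map_smul]
    have hc1 := heis_heis_comm μ (n + q) p v
    have hc2 := heis_heis_comm μ q (n + p) v
    show sugawara μ n (heis μ q (heis μ p v)) - heis μ q (heis μ p (sugawara μ n v)) = _
    by_cases hnpq : n + p + q = 0
    · rw [if_pos (by omega : (n + q) + p = 0)] at hc1
      rw [if_pos (by omega : q + (n + p) = 0)] at hc2
      have hcast : (n:ℂ) + p + q = 0 := by exact_mod_cast congrArg (fun z : ℤ => (z:ℂ)) hnpq
      have hsc : (-(q:ℂ)) • (((n + q : ℤ):ℂ) • v) + (-(p:ℂ)) • ((q:ℂ) • v) = 0 := by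
        rw [smul_smul, smul_smul, ← add_smul]
        have : (-(q:ℂ)) * ((n + q : ℤ):ℂ) + (-(p:ℂ)) * (q:ℂ) = 0 := by
          push_cast
          linear_combination (-(q:ℂ)) * hcast
        rw [this, zero_smul]
      linear_combination (norm := module) hA + hB + (-(q:ℂ)) • hc1 + (-(p:ℂ)) • hc2 + hsc
    · rw [if_neg (by omega)] at hc1
      rw [if_neg (by omega)] at hc2
      rw [zero_smul] at hc1 hc2
      linear_combination (norm := module) hA + hB + (-(q:ℂ)) • hc1 + (-(p:ℂ)) • hc2
-- layer 5: arithmetic sums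
lemma gauss_neg (p : ℕ) :
    ∑ s ∈ Finset.Icc (-(p:ℤ)) (-1), (s:ℂ) = -(((p:ℂ) * ((p:ℂ) + 1)) / 2) := by
  induction p with
  | zero =>
    rw [show (-((0:ℕ):ℤ)) = 0 by norm_num, Finset.Icc_eq_empty (by omega)]
    simp
  | succ p ih =>
    have hins : Finset.Icc (-((p+1:ℕ):ℤ)) (-1) = insert (-(p:ℤ)-1) (Finset.Icc (-(p:ℤ)) (-1)) := by
      ext x
      simp only [Finset.mem_Icc, Finset.mem_insert]
      omega
    rw [hins, Finset.sum_insert (by simp only [Finset.mem_Icc]; omega), ih]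
    push_cast
    ring

lemma cube_neg (p : ℕ) :
    ∑ s ∈ Finset.Icc (-(p:ℤ)) (-1), ((s:ℂ) * ((p:ℂ) + s)) = -(((p:ℂ)^3 - p) / 6) := by
  induction p with
  | zero =>
    rw [show (-((0:ℕ):ℤ)) = 0 by norm_num, Finset.Icc_eq_empty (by omega)]
    simp
  | succ p ih =>
    have hins : Finset.Icc (-((p+1:ℕ):ℤ)) (-1) = insert (-(p:ℤ)-1) (Finset.Icc (-(p:ℤ)) (-1)) := by
      ext x
      simp only [Finset.mem_Icc, Finset.mem_insert]
      omega
    have hsplit : ∑ s ∈ Finset.Icc (-(p:ℤ)) (-1), ((s:ℂ) * (((p+1:ℕ):ℂ) + s))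
        = (∑ s ∈ Finset.Icc (-(p:ℤ)) (-1), ((s:ℂ) * ((p:ℂ) + s)))
          + ∑ s ∈ Finset.Icc (-(p:ℤ)) (-1), (s:ℂ) := by
      rw [← Finset.sum_add_distrib]
      apply Finset.sum_congr rfl
      intro s _
      push_cast
      ring
    rw [hins, Finset.sum_insert (by simp only [Finset.mem_Icc]; omega), hsplit, ih, gauss_neg]
    push_cast
    ring

lemma gauss_pos (q : ℕ) :
    ∑ s ∈ Finset.Icc (0:ℤ) ((q:ℤ)-1), (s:ℂ) = ((q:ℂ) * ((q:ℂ) - 1)) / 2 := by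
  induction q with
  | zero =>
    rw [Finset.Icc_eq_empty (by omega)]
    simp
  | succ q ih =>
    have hins : Finset.Icc (0:ℤ) (((q+1:ℕ):ℤ)-1) = insert ((q:ℤ)) (Finset.Icc (0:ℤ) ((q:ℤ)-1)) := by
      ext x
      simp only [Finset.mem_Icc, Finset.mem_insert]
      omega
    rw [hins, Finset.sum_insert (by simp only [Finset.mem_Icc]; omega), ih]
    push_cast
    ring

lemma cube_pos (q : ℕ) :
    ∑ s ∈ Finset.Icc (0:ℤ) ((q:ℤ)-1), ((s:ℂ) * ((s:ℂ) - q)) = -(((q:ℂ)^3 - q) / 6) := by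
  induction q with
  | zero =>
    rw [Finset.Icc_eq_empty (by omega)]
    simp
  | succ q ih =>
    have hins : Finset.Icc (0:ℤ) (((q+1:ℕ):ℤ)-1) = insert ((q:ℤ)) (Finset.Icc (0:ℤ) ((q:ℤ)-1)) := by
      ext x
      simp only [Finset.mem_Icc, Finset.mem_insert]
      omega
    have hsplit : ∑ s ∈ Finset.Icc (0:ℤ) ((q:ℤ)-1), ((s:ℂ) * ((s:ℂ) - ((q+1:ℕ):ℂ)))
        = (∑ s ∈ Finset.Icc (0:ℤ) ((q:ℤ)-1), ((s:ℂ) * ((s:ℂ) - (q:ℂ))))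
          - ∑ s ∈ Finset.Icc (0:ℤ) ((q:ℤ)-1), (s:ℂ) := by
      rw [← Finset.sum_sub_distrib]
      apply Finset.sum_congr rfl
      intro s _
      push_cast
      ring
    rw [hins, Finset.sum_insert (by simp only [Finset.mem_Icc]; omega), hsplit, ih, gauss_pos]
    push_cast
    ring

lemma central_sum (n m : ℤ) {I : Finset ℤ} (hI : Finset.Icc (-(n.natAbs:ℤ)) ((n.natAbs:ℤ)) ⊆ I) :
    ∑ s ∈ I, ((-((m - s : ℤ):ℂ)) * (if (n+m-s) + s = 0 ∧ s < n+m-s then ((n+m-s : ℤ):ℂ) else 0)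
      + (-(s:ℂ)) * (if (m-s) + (n+s) = 0 ∧ n+s < m-s then ((m-s : ℤ):ℂ) else 0))
    = if n + m = 0 then ((n:ℂ)^3 - n) / 6 else 0 := by
  by_cases hnm : n + m = 0
  swap
  · rw [if_neg hnm]
    apply Finset.sum_eq_zero
    intro s _
    rw [if_neg (by omega), if_neg (by omega)]
    ring
  · rw [if_pos hnm]
    obtain rfl : m = -n := by omega
    have hfval : ∀ s : ℤ,
        ((-((-n - s : ℤ):ℂ)) * (if (n + -n - s) + s = 0 ∧ s < n + -n - s then ((n + -n - s : ℤ):ℂ) else 0)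
          + (-(s:ℂ)) * (if (-n - s) + (n + s) = 0 ∧ n + s < -n - s then ((-n - s : ℤ):ℂ) else 0))
        = if -n ≤ s ∧ s ≤ -1 then -((s:ℂ) * ((n:ℂ) + s))
          else if 0 ≤ s ∧ s ≤ -n - 1 then (s:ℂ) * ((n:ℂ) + s) else 0 := by
      intro s
      by_cases h1 : s < 0
      · by_cases h2 : -n ≤ s
        · rw [if_pos ⟨by omega, by omega⟩, if_neg (by omega), if_pos ⟨h2, by omega⟩]
          push_cast
          ring
        · rw [if_pos ⟨by omega, by omega⟩, if_pos ⟨by omega, by omega⟩, if_neg (by omega),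
            if_neg (by omega)]
          push_cast
          ring
      · by_cases h2 : s ≤ -n - 1
        · rw [if_neg (by omega), if_pos ⟨by omega, by omega⟩, if_neg (by omega),
            if_pos ⟨by omega, h2⟩]
          push_cast
          ring
        · rw [if_neg (by omega), if_neg (by omega), if_neg (by omega), if_neg (by omega)]
          ring
    rw [Finset.sum_congr rfl (fun s _ => hfval s)]
    rcases le_or_gt 0 n with hn | hn
    · obtain ⟨p, rfl⟩ : ∃ p : ℕ, n = (p:ℤ) := ⟨n.toNat, by omega⟩
      have hsub' : Finset.Icc (-((p:ℕ):ℤ)) (-1) ⊆ I := by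
        intro x hx
        apply hI
        simp only [Finset.mem_Icc] at *
        omega
      have step : ∀ s ∈ I,
          (if -(p:ℤ) ≤ s ∧ s ≤ -1 then -((s:ℂ) * ((((p:ℕ):ℤ):ℂ) + s))
            else if 0 ≤ s ∧ s ≤ -(p:ℤ) - 1 then (s:ℂ) * ((((p:ℕ):ℤ):ℂ) + s) else 0)
          = if s ∈ Finset.Icc (-((p:ℕ):ℤ)) (-1) then -((s:ℂ) * (((p:ℕ):ℂ) + s)) else 0 := by
        intro s _
        by_cases h1 : -(p:ℤ) ≤ s ∧ s ≤ -1
        · rw [if_pos h1, if_pos (by simp only [Finset.mem_Icc]; omega)]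
          push_cast
          ring
        · rw [if_neg h1, if_neg (by omega), if_neg (by simp only [Finset.mem_Icc]; omega)]
      rw [Finset.sum_congr rfl step, Finset.sum_ite_mem,
        Finset.inter_eq_right.mpr hsub', Finset.sum_neg_distrib, cube_neg]
      push_cast
      ring
    · obtain ⟨q, rfl⟩ : ∃ q : ℕ, n = -(q:ℤ) := ⟨(-n).toNat, by omega⟩
      have hsub' : Finset.Icc (0:ℤ) ((q:ℤ)-1) ⊆ I := by
        intro x hx
        apply hI
        simp only [Finset.mem_Icc] at *
        omega
      have step : ∀ s ∈ I,
          (if -(-((q:ℕ):ℤ)) ≤ s ∧ s ≤ -1 then -((s:ℂ) * ((((-(q:ℤ) : ℤ)):ℂ) + s))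
            else if 0 ≤ s ∧ s ≤ -(-((q:ℕ):ℤ)) - 1 then (s:ℂ) * ((((-(q:ℤ) : ℤ)):ℂ) + s) else 0)
          = if s ∈ Finset.Icc (0:ℤ) ((q:ℤ)-1) then (s:ℂ) * ((s:ℂ) - ((q:ℕ):ℂ)) else 0 := by
        intro s _
        by_cases h1 : 0 ≤ s ∧ s ≤ ((q:ℕ):ℤ) - 1
        · rw [if_neg (by omega), if_pos (by omega), if_pos (by simp only [Finset.mem_Icc]; omega)]
          push_cast
          ring
        · rw [if_neg (by omega), if_neg (by omega), if_neg (by simp only [Finset.mem_Icc]; omega)]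
      rw [Finset.sum_congr rfl step, Finset.sum_ite_mem,
        Finset.inter_eq_right.mpr hsub', cube_pos]
      push_cast
      ring
-- layer 6: main theorem
/-- The free-field (Sugawara) construction realizes the Virasoro algebra with central
charge `c = 1`:
`[L_n, L_m] = (n - m) L_{n+m} + (n³ - n)/12 δ_{n+m,0}`. -/
theorem stmt_18 (μ : ℂ) (n m : ℤ) (v : FockSpace) :
    sugawara μ n (sugawara μ m v) - sugawara μ m (sugawara μ n v)
      = ((n : ℂ) - (m : ℂ)) • sugawara μ (n + m) v
        + (if n + m = 0 then ((n : ℂ)^3 - (n : ℂ)) / 12 else 0) • v := by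
  classical
  set d : ℕ := bnd v with hdd
  have hv : bd d v := bd_bnd v
  set N : ℤ := (d:ℤ) + n.natAbs + m.natAbs + 1 with hN
  set I : Finset ℤ := Finset.Icc (-N) N with hIdef
  have hIm : Finset.Icc (m - (d:ℤ)) (d:ℤ) ⊆ I := by
    intro x hx
    rw [Finset.mem_Icc] at hx
    rw [hIdef, Finset.mem_Icc]
    omega
  have hImn : Finset.Icc (m - ((d + n.natAbs : ℕ):ℤ)) (((d + n.natAbs : ℕ):ℤ)) ⊆ I := by
    intro x hx
    rw [Finset.mem_Icc] at hx
    rw [hIdef, Finset.mem_Icc]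
    omega
  have hInm : Finset.Icc ((n + m) - (d:ℤ)) ((d:ℤ)) ⊆ I := by
    intro x hx
    rw [Finset.mem_Icc] at hx
    rw [hIdef, Finset.mem_Icc]
    omega
  have hIcentral : Finset.Icc (-(n.natAbs:ℤ)) ((n.natAbs:ℤ)) ⊆ I := by
    intro x hx
    rw [Finset.mem_Icc] at hx
    rw [hIdef, Finset.mem_Icc]
    omega
  have hnv : bd (d + n.natAbs) (sugawara μ n v) := bd_sugawara μ n hv
  have eB : sugawara μ n (sugawara μ m v)
      = (1/2:ℂ) • ∑ s ∈ I, sugawara μ n (nord μ (m - s) s v) := by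
    rw [sugawara_eq_sum μ m hv hIm, sugawara_smul, sugawara_sum]
  have eC : sugawara μ m (sugawara μ n v)
      = (1/2:ℂ) • ∑ s ∈ I, nord μ (m - s) s (sugawara μ n v) :=
    sugawara_eq_sum μ m hnv hImn
  rw [eB, eC, ← smul_sub, ← Finset.sum_sub_distrib]
  have hterm : ∀ s ∈ I,
      sugawara μ n (nord μ (m - s) s v) - nord μ (m - s) s (sugawara μ n v)
        = (-((m - s : ℤ):ℂ)) • nord μ (n+m-s) s v
          + (-(s:ℂ)) • nord μ (m-s) (n+s) v
          + ((-((m - s : ℤ):ℂ)) * (if (n+m-s) + s = 0 ∧ s < n+m-s then ((n+m-s : ℤ):ℂ) else 0)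
             + (-(s:ℂ)) * (if (m-s) + (n+s) = 0 ∧ n+s < m-s then ((m-s : ℤ):ℂ) else 0)) • v := by
    intro s _
    rw [sugawara_nord_comm]
    have e1 : n + (m - s) = n + m - s := by ring
    rw [e1, heis_heis_eq_nord μ (n+m-s) s v, heis_heis_eq_nord μ (m-s) (n+s) v]
    module
  rw [Finset.sum_congr rfl hterm, Finset.sum_add_distrib, Finset.sum_add_distrib,
    ← Finset.sum_smul, central_sum n m hIcentral]
  have hreindex : (∑ s ∈ I, (-(s:ℂ)) • nord μ (m-s) (n+s) v)
      = ∑ s ∈ I, (-((s - n : ℤ):ℂ)) • nord μ (n+m-s) s v := by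
    set J : Finset ℤ := Finset.Icc (-N + n) (N + n) with hJ
    have h1 : (∑ s ∈ I, (-(s:ℂ)) • nord μ (m-s) (n+s) v)
        = ∑ u ∈ J, (-((u - n : ℤ):ℂ)) • nord μ (n+m-u) u v := by
      refine Finset.sum_nbij' (fun s => s + n) (fun u => u - n) ?_ ?_ ?_ ?_ ?_
      · intro a ha
        rw [hIdef, Finset.mem_Icc] at ha
        rw [hJ, Finset.mem_Icc]
        omega
      · intro a ha
        rw [hJ, Finset.mem_Icc] at ha
        rw [hIdef, Finset.mem_Icc]
        omega
      · intro a _; omega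
      · intro a _; omega
      · intro s _
        have e2 : (s + n) - n = s := by ring
        have e3 : n + m - (s + n) = m - s := by ring
        rw [e2, e3, add_comm s n]
    have h2 : ∀ u : ℤ, u ∉ Finset.Icc (n + m - (d:ℤ)) (d:ℤ)
        → (-((u - n : ℤ):ℂ)) • nord μ (n+m-u) u v = 0 := by
      intro u hu
      rw [Finset.mem_Icc] at hu
      rw [nord_ann μ hv (by rw [lt_max_iff]; omega), smul_zero]
    set K : Finset ℤ := Finset.Icc (-N - (n.natAbs:ℤ)) (N + (n.natAbs:ℤ)) with hK
    have hIK : I ⊆ K := by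
      intro x hx
      rw [hIdef, Finset.mem_Icc] at hx
      rw [hK, Finset.mem_Icc]
      omega
    have hJK : J ⊆ K := by
      intro x hx
      rw [hJ, Finset.mem_Icc] at hx
      rw [hK, Finset.mem_Icc]
      omega
    have hIccI : Finset.Icc (n + m - (d:ℤ)) (d:ℤ) ⊆ I := by
      intro x hx
      rw [Finset.mem_Icc] at hx
      rw [hIdef, Finset.mem_Icc]
      omega
    have hIccJ : Finset.Icc (n + m - (d:ℤ)) (d:ℤ) ⊆ J := by
      intro x hx
      rw [Finset.mem_Icc] at hx
      rw [hJ, Finset.mem_Icc]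
      omega
    rw [h1]
    exact (Finset.sum_subset hJK (fun x _ hx => h2 x (fun hc => hx (hIccJ hc)))).trans
      (Finset.sum_subset hIK (fun x _ hx => h2 x (fun hc => hx (hIccI hc)))).symm
  rw [hreindex]
  have hcomb : (∑ s ∈ I, (-((m - s : ℤ):ℂ)) • nord μ (n+m-s) s v)
        + (∑ s ∈ I, (-((s - n : ℤ):ℂ)) • nord μ (n+m-s) s v)
      = ((n:ℂ) - (m:ℂ)) • ∑ s ∈ I, nord μ (n+m-s) s v := by
    rw [Finset.smul_sum, ← Finset.sum_add_distrib]
    apply Finset.sum_congr rfl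
    intro s _
    rw [← add_smul]
    congr 1
    push_cast
    ring
  rw [hcomb, sugawara_eq_sum μ (n+m) hv hInm]
  by_cases hnm : n + m = 0
  · rw [if_pos hnm, if_pos hnm]
    module
  · rw [if_neg hnm, if_neg hnm]
    module
end

section
/- Let B be a finite-dimensional commutative Novikov algebra over ℂ that is nondegenerate, meaning the bilinear-form-valued map u ↦ (a,b) := u(ab) is nondegenerate for generic u ∈ B* (i.e. det of the form is a not-identically-zero polynomial in u). Then B has a unit element. -/
/-- A finite-dimensional commutative (hence associative) Novikov algebra over ℂ which is
nondegenerate — i.e. the bilinear form `(a,b) = u(ab)` is nondegenerate for some `u ∈ B*` —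
has a unit element. -/
theorem stmt_19 {B : Type*} [NonUnitalCommRing B] [Module ℂ B]
    [SMulCommClass ℂ B B] [IsScalarTower ℂ B B] [FiniteDimensional ℂ B]
    (h1 : ∀ a b c : B, (a * b) * c = (a * c) * b)
    (h2 : ∀ a b c : B, (a * b) * c - a * (b * c) = (b * a) * c - b * (a * c))
    (hnd : ∃ u : B →ₗ[ℂ] ℂ, ∀ x : B, (∀ y : B, u (x * y) = 0) → x = 0) :
    ∃ e : B, ∀ x : B, e * x = x ∧ x * e = x := by
  obtain ⟨u, hu⟩ := hnd
  -- the map x ↦ (y ↦ u (x*y))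
  let T : B →ₗ[ℂ] Module.Dual ℂ B :=
    { toFun := fun x => u.comp (LinearMap.mul ℂ B x)
      map_add' := fun a b => by ext y; simp [add_mul]
      map_smul' := fun c a => by ext y; simp [smul_mul_assoc] }
  have hT : ∀ x y, T x y = u (x * y) := fun x y => rfl
  have hinj : Function.Injective T := by
    rw [← LinearMap.ker_eq_bot, LinearMap.ker_eq_bot']
    intro x hx
    refine hu x fun y => ?_
    rw [← hT, hx]; rfl
  have hsurj : Function.Surjective T :=
    (LinearMap.injective_iff_surjective_of_finrank_eq_finrank
      (Subspace.dual_finrank_eq).symm).mp hinj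
  obtain ⟨e, he⟩ := hsurj u
  have key : ∀ z : B, u (e * z) = u z := fun z => by
    rw [← hT, he]
  refine ⟨e, fun x => ?_⟩
  have hex : e * x = x := by
    have := hu (e * x - x) fun y => by
      rw [sub_mul, map_sub, mul_assoc, key, sub_self]
    exact sub_eq_zero.mp this
  exact ⟨hex, by rw [mul_comm]; exact hex⟩
end
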